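/- arXiv:math/9611224 — 3 statements merged into one kernel-verified Lean document; each statement's English description precedes it below -/
import Mathlib

section
/- For every f ∈ S, if (f, β) ∈ θ then β ≤ f. -/
/-- Lemma 5.1(2): With β chosen ≤-minimal among elements x admitting some
y < x with (x,y) ∈ θ̄ \ θ, every f with (f,β) ∈ θ satisfies β ≤ f. -/
theorem statement1 {S : Type*} [Fintype S] [SemilatticeInf S]
    (θ θb : S → S → Prop)
    (hθ : Equivalence θ) (hθb : Equivalence θb)
    (hθc : ∀ x y z : S, θ x y → θ (x ⊓ z) (y ⊓ z))
    (hθbc : ∀ x y z : S, θb x y → θb (x ⊓ z) (y ⊓ z))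
    (hsub : ∀ x y, θ x y → θb x y)
    (β : S)
    (hadm : ∃ y, y < β ∧ θb β y ∧ ¬ θ β y)
    (hmin : ∀ x : S, (∃ y, y < x ∧ θb x y ∧ ¬ θ x y) → ¬ x < β) :
    ∀ f : S, θ f β → β ≤ f := by
  intro f hf
  by_contra hle
  obtain ⟨y, hy, hby, hnby⟩ := hadm
  -- θ β (β ⊓ f)
  have hβx : θ β (β ⊓ f) := by
    have := hθc f β β hf
    have h1 : θ (f ⊓ β) β := by simpa [inf_idem] using this
    have h2 : θ β (f ⊓ β) := hθ.symm h1
    simpa [inf_comm] using h2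
  have hxβ : (β ⊓ f) < β := lt_of_le_of_ne inf_le_left (fun h => hle (by
    have : β ≤ f := by rw [← h]; exact inf_le_right
    exact this))
  -- key: θ β (y ⊓ f) is impossible
  have key : ¬ θ β (y ⊓ f) := by
    intro h
    have h1 := hθc β (y ⊓ f) y h
    have hβy : β ⊓ y = y := inf_eq_right.mpr hy.le
    have h2 : θ y (y ⊓ f) := by
      have e : y ⊓ f ⊓ y = y ⊓ f := by
        rw [inf_right_comm, inf_idem]
      rw [hβy, e] at h1
      exact h1
    exact hnby (hθ.trans h (hθ.symm h2))
  -- β ⊓ f is admissible via y ⊓ f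
  have hyf_le : y ⊓ f ≤ β ⊓ f := inf_le_inf_right f hy.le
  have hne : y ⊓ f ≠ β ⊓ f := by
    intro h
    exact key (h ▸ hβx)
  have hlt : y ⊓ f < β ⊓ f := lt_of_le_of_ne hyf_le hne
  have hbb : θb (β ⊓ f) (y ⊓ f) := hθbc β y f hby
  have hnb : ¬ θ (β ⊓ f) (y ⊓ f) := fun h => key (hθ.trans hβx h)
  exact hmin (β ⊓ f) ⟨y ⊓ f, hlt, hbb, hnb⟩ hxβ
end

section
/- For all f, g ∈ S with f < β and g < β, if (f, g) ∈ θ̄ then (f, g) ∈ θ. -/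
/-- Lemma 5.1(3): With β chosen ≤-minimal among elements x admitting some
y < x with (x,y) ∈ θ̄ \ θ: for all f, g < β, if (f,g) ∈ θ̄ then (f,g) ∈ θ. -/
theorem statement2 {S : Type*} [Fintype S] [SemilatticeInf S]
    (θ θb : S → S → Prop)
    (hθ : Equivalence θ) (hθb : Equivalence θb)
    (hθc : ∀ x y z : S, θ x y → θ (x ⊓ z) (y ⊓ z))
    (hθbc : ∀ x y z : S, θb x y → θb (x ⊓ z) (y ⊓ z))
    (hsub : ∀ x y, θ x y → θb x y)
    (β : S)
    (hadm : ∃ y, y < β ∧ θb β y ∧ ¬ θ β y)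
    (hmin : ∀ x : S, (∃ y, y < x ∧ θb x y ∧ ¬ θ x y) → ¬ x < β) :
    ∀ f g : S, f < β → g < β → θb f g → θ f g := by
  intro f g hf hg hfg
  have key : ∀ a b : S, a < β → θb a b → θ a (a ⊓ b) := by
    intro a b ha hab
    have h1 : θb a (a ⊓ b) := by
      have := hθbc a b a hab
      simpa [inf_idem, inf_comm] using this
    rcases eq_or_lt_of_le (inf_le_left : a ⊓ b ≤ a) with h | h
    · rw [h]; exact hθ.refl a
    · by_contra hn
      exact hmin a ⟨a ⊓ b, h, h1, hn⟩ ha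
  have h1 := key f g hf hfg
  have h2 := key g f hg (hθb.symm hfg)
  rw [inf_comm] at h2
  exact hθ.trans h1 (hθ.symm h2)
end

section
/- For all f, g ∈ A, the pair (f, g) belongs to θ if and only if for every unary polynomial F of A one has F(f) ∧ β = β ⇔ F(g) ∧ β = β. -/
/-!
A minimal admissible β is θ-related to nothing strictly below it: such a `z` would itself be
admissible, witnessed by `z ⊓ y` where `y < β` is a θ̄-witness for β. Hence the up-set of β is a
union of θ-classes, and θ is contained in the relation "no unary polynomial `F` separates `f` and
`g` by whether `β ≤ F ·`". An equivalence relation preserved by unary polynomials is a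
congruence, and this one misses the θ̄-pair `(β, y)`, so by the covering property it cannot
properly contain θ.
-/
/-- The polynomial clone of an algebra on `A` with basic operations `Ops`:
functions obtained by composing basic operations, coordinate projections,
and constant functions. -/
inductive AlgPoly {A : Type*} (Ops : (n : ℕ) → Set ((Fin n → A) → A)) :
    {m : ℕ} → ((Fin m → A) → A) → Prop where
  | proj {m : ℕ} (i : Fin m) : AlgPoly Ops fun v => v i
  | const {m : ℕ} (c : A) : AlgPoly Ops fun _ : Fin m → A => c
  | comp {m n : ℕ} (f : (Fin n → A) → A) (hf : f ∈ Ops n)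
      (g : Fin n → ((Fin m → A) → A)) (hg : ∀ i, AlgPoly Ops (g i)) :
      AlgPoly Ops fun v => f fun i => g i v

/-- Compatibility of a relation with all basic operations. -/
def IsCompatible {A : Type*} (Ops : (n : ℕ) → Set ((Fin n → A) → A))
    (R : A → A → Prop) : Prop :=
  ∀ (n : ℕ), ∀ f ∈ Ops n, ∀ v w : Fin n → A, (∀ i, R (v i) (w i)) → R (f v) (f w)

section

variable {A : Type*} {Ops : (n : ℕ) → Set ((Fin n → A) → A)}

namespace AlgPoly

theorem subst {m n : ℕ} {h : (Fin n → A) → A} (hh : AlgPoly Ops h)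
    {g : Fin n → (Fin m → A) → A} (hg : ∀ i, AlgPoly Ops (g i)) :
    AlgPoly Ops fun v => h fun i => g i v := by
  induction hh with
  | proj i => exact hg i
  | const c => exact const c
  | comp f hf gs _ ih => exact comp f hf (fun i v => gs i fun j => g j v) ih

theorem map_rel {R : A → A → Prop} (hR : ∀ a, R a a) (hc : IsCompatible Ops R)
    {m : ℕ} {p : (Fin m → A) → A} (hp : AlgPoly Ops p) {v w : Fin m → A}
    (hvw : ∀ i, R (v i) (w i)) : R (p v) (p w) := by
  induction hp with
  | proj i => exact hvw i
  | const c => exact hR c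
  | comp f hf _ _ ih => exact hc _ f hf _ _ ih

end AlgPoly

def IsUnaryPoly (Ops : (n : ℕ) → Set ((Fin n → A) → A)) (F : A → A) : Prop :=
  AlgPoly Ops (m := 1) fun v => F (v 0)

namespace IsUnaryPoly

theorem id : IsUnaryPoly Ops id := AlgPoly.proj 0

theorem comp {F G : A → A} (hF : IsUnaryPoly Ops F) (hG : IsUnaryPoly Ops G) :
    IsUnaryPoly Ops (F ∘ G) :=
  AlgPoly.subst hF (g := fun _ v => G (v 0)) fun _ => hG

theorem update_basic {n : ℕ} {f : (Fin n → A) → A} (hf : f ∈ Ops n) (u : Fin n → A)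
    (i : Fin n) : IsUnaryPoly Ops fun x => f (Function.update u i x) :=
  AlgPoly.comp f hf _ fun j => by
    rcases eq_or_ne j i with rfl | hj
    · simpa using AlgPoly.proj 0
    · simpa [Function.update_of_ne hj] using AlgPoly.const (u j)

theorem map_rel {R : A → A → Prop} (hR : ∀ a, R a a) (hc : IsCompatible Ops R)
    {F : A → A} (hF : IsUnaryPoly Ops F) {a b : A} (hab : R a b) : R (F a) (F b) :=
  AlgPoly.map_rel hR hc hF (v := fun _ => a) (w := fun _ => b) fun _ => hab

end IsUnaryPoly

theorem isCompatible_of_isUnaryPoly {R : A → A → Prop} (hR : Equivalence R)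
    (hunary : ∀ F, IsUnaryPoly Ops F → ∀ a b, R a b → R (F a) (F b)) :
    IsCompatible Ops R := by
  intro n f hf v w hvw
  have hchain : ∀ s : Finset (Fin n), R (f v) (f (s.piecewise w v)) := by
    intro s
    induction s using Finset.induction_on with
    | empty => simpa using hR.refl _
    | insert i s hi ih =>
      have hstep := hunary _ (IsUnaryPoly.update_basic hf (s.piecewise w v) i) _ _ (hvw i)
      rw [← Finset.piecewise_eq_of_notMem s w v hi, Function.update_eq_self] at hstep
      rw [Finset.piecewise_insert]
      exact hR.trans ih hstep
  simpa using hchain Finset.univ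

def PolyIndistinguishable (Ops : (n : ℕ) → Set ((Fin n → A) → A)) (P : A → Prop)
    (a b : A) : Prop :=
  ∀ F : A → A, IsUnaryPoly Ops F → (P (F a) ↔ P (F b))

namespace PolyIndistinguishable

variable {P : A → Prop}

theorem equivalence : Equivalence (PolyIndistinguishable Ops P) :=
  ⟨fun _ _ _ => Iff.rfl, fun h F hF => (h F hF).symm,
    fun h₁ h₂ F hF => (h₁ F hF).trans (h₂ F hF)⟩

theorem isCompatible : IsCompatible Ops (PolyIndistinguishable Ops P) :=
  isCompatible_of_isUnaryPoly equivalence fun G hG _ _ hab F hF => hab (F ∘ G) (hF.comp hG)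

theorem of_rel {R : A → A → Prop} (hR : ∀ a, R a a) (hc : IsCompatible Ops R)
    (hP : ∀ a b, R a b → (P a ↔ P b)) {a b : A} (hab : R a b) :
    PolyIndistinguishable Ops P a b :=
  fun _ hF => hP _ _ (hF.map_rel hR hc hab)

end PolyIndistinguishable

section Semilattice

variable [SemilatticeInf A]

theorem IsCompatible.inf {R : A → A → Prop} (hc : IsCompatible Ops R)
    (hmeet : (fun v : Fin 2 → A => v 0 ⊓ v 1) ∈ Ops 2) {a b c d : A}
    (hab : R a b) (hcd : R c d) : R (a ⊓ c) (b ⊓ d) :=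
  hc 2 _ hmeet ![a, c] ![b, d] fun i => by fin_cases i <;> assumption

variable {θ θb : A → A → Prop} {β y₀ : A}
  (hθ : Equivalence θ) (hθinf : ∀ {a b c d}, θ a b → θ c d → θ (a ⊓ c) (b ⊓ d))
  (hθbinf : ∀ {a b c d}, θb a b → θb c d → θb (a ⊓ c) (b ⊓ d))
  (hsub : ∀ x y, θ x y → θb x y)
  (hy₀ : y₀ < β) (hβy₀ : θb β y₀) (hnβy₀ : ¬ θ β y₀)
  (hmin : ∀ x : A, (∃ y, y < x ∧ θb x y ∧ ¬ θ x y) → ¬ x < β)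
include hθ hθinf hθbinf hsub hy₀ hβy₀ hnβy₀ hmin

theorem not_rel_of_lt_minimal_admissible {z : A} (hz : z < β) : ¬ θ β z := by
  intro hβz
  have hzy : θb z (z ⊓ y₀) := by
    simpa [inf_eq_left.mpr hz.le] using hθbinf (hsub z z (hθ.refl z)) hβy₀
  have hnzy : ¬ θ z (z ⊓ y₀) := by
    intro hzy'
    have hβzy : θ β (z ⊓ y₀) := hθ.trans hβz hzy'
    have hy₀zy : θ y₀ (z ⊓ y₀) := by
      simpa [inf_eq_left.mpr hy₀.le] using hθinf (hθ.refl y₀) hβzy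
    exact hnβy₀ (hθ.trans hβzy (hθ.symm hy₀zy))
  have hlt : z ⊓ y₀ < z := lt_of_le_of_ne inf_le_left fun h => hnzy (by rw [h]; exact hθ.refl z)
  exact hmin z ⟨_, hlt, hzy, hnzy⟩ hz

theorem le_of_rel_of_le {a b : A} (hab : θ a b) (ha : β ≤ a) : β ≤ b := by
  have hβ : θ β (b ⊓ β) := by simpa [inf_eq_right.mpr ha] using hθinf hab (hθ.refl β)
  by_contra hb
  exact not_rel_of_lt_minimal_admissible hθ hθinf hθbinf hsub hy₀ hβy₀ hnβy₀ hmin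
    (inf_le_right.lt_of_ne fun h => hb (h ▸ inf_le_left)) hβ

end Semilattice

end

theorem statement3_general {A : Type*} [SemilatticeInf A]
    (Ops : (n : ℕ) → Set ((Fin n → A) → A))
    (hmeet : (fun v : Fin 2 → A => v 0 ⊓ v 1) ∈ Ops 2)
    (θ θb : A → A → Prop)
    (hθ : Equivalence θ)
    (hθc : IsCompatible Ops θ) (hθbc : IsCompatible Ops θb)
    (hsub : ∀ x y, θ x y → θb x y)
    (hcover : ∀ R : A → A → Prop, Equivalence R → IsCompatible Ops R →
      (∀ x y, θ x y → R x y) → (∃ x y, R x y ∧ ¬ θ x y) → ∀ x y, θb x y → R x y)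
    (β : A)
    (hadm : ∃ y, y < β ∧ θb β y ∧ ¬ θ β y)
    (hmin : ∀ x : A, (∃ y, y < x ∧ θb x y ∧ ¬ θ x y) → ¬ x < β) :
    ∀ f g : A, θ f g ↔
      ∀ F : A → A, AlgPoly Ops (m := 1) (fun v => F (v 0)) →
        (F f ⊓ β = β ↔ F g ⊓ β = β) := by
  obtain ⟨y₀, hy₀, hβy₀, hnβy₀⟩ := hadm
  have hup {a b : A} : θ a b → β ≤ a → β ≤ b :=
    le_of_rel_of_le hθ (hθc.inf hmeet) (hθbc.inf hmeet) hsub hy₀ hβy₀ hnβy₀ hmin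
  have hθR (a b : A) : θ a b → PolyIndistinguishable Ops (· ⊓ β = β) a b :=
    PolyIndistinguishable.of_rel hθ.refl hθc fun x y hxy => by
      simpa only [inf_eq_right] using ⟨hup hxy, hup (hθ.symm hxy)⟩
  intro f g
  refine ⟨hθR f g, fun hfg => by_contra fun hnfg => ?_⟩
  have hsep := hcover _ PolyIndistinguishable.equivalence PolyIndistinguishable.isCompatible
    hθR ⟨f, g, hfg, hnfg⟩ β y₀ hβy₀ id IsUnaryPoly.id
  simp only [id, inf_idem, inf_eq_left.mpr hy₀.le, true_iff] at hsep
  exact hy₀.ne hsep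

/-- Lemma 5.1(4): in a finite algebra with semilattice meet among the basic
operations, with θ̄ the unique cover of θ and β minimal admissible, (f,g) ∈ θ iff for
every unary polynomial F, F(f) ∧ β = β ⇔ F(g) ∧ β = β. -/
theorem statement3 {A : Type*} [Fintype A] [Nonempty A] [SemilatticeInf A]
    (Ops : (n : ℕ) → Set ((Fin n → A) → A))
    (hmeet : (fun v : Fin 2 → A => v 0 ⊓ v 1) ∈ Ops 2)
    (θ θb : A → A → Prop)
    (hθ : Equivalence θ) (hθb : Equivalence θb)
    (hθc : IsCompatible Ops θ) (hθbc : IsCompatible Ops θb)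
    (hsub : ∀ x y, θ x y → θb x y)
    (hproper : ∃ x y, θb x y ∧ ¬ θ x y)
    (hcover : ∀ R : A → A → Prop, Equivalence R → IsCompatible Ops R →
      (∀ x y, θ x y → R x y) → (∃ x y, R x y ∧ ¬ θ x y) → ∀ x y, θb x y → R x y)
    (β : A)
    (hadm : ∃ y, y < β ∧ θb β y ∧ ¬ θ β y)
    (hmin : ∀ x : A, (∃ y, y < x ∧ θb x y ∧ ¬ θ x y) → ¬ x < β) :
    ∀ f g : A, θ f g ↔
      ∀ F : A → A, AlgPoly Ops (m := 1) (fun v => F (v 0)) →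
        (F f ⊓ β = β ↔ F g ⊓ β = β) :=
  statement3_general Ops hmeet θ θb hθ hθc hθbc hsub hcover β hadm hmin
end
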